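/- arXiv:2311.10074 — 2 statements merged into one kernel-verified Lean document; each statement's English description precedes it below -/
import Mathlib

section
/- For every s ∈ ℝ, the kernel ker Q(s) is a finite-dimensional subspace of H. (In particular every focal radius along the normal geodesic has finite multiplicity.) -/
variable {H : Type*} [NormedAddCommGroup H] [InnerProductSpace ℝ H] [CompleteSpace H]

/-- `Dco T s = ∑_{k=0}^∞ ((-1)^k s^{2k} / (2k)!) • T^k`. -/
noncomputable def Dco (T : H →L[ℝ] H) (s : ℝ) : H →L[ℝ] H :=
  ∑' k : ℕ, ((-1 : ℝ) ^ k * s ^ (2 * k) / (Nat.factorial (2 * k) : ℝ)) • T ^ k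

/-- `Dsi T s = ∑_{k=0}^∞ ((-1)^k s^{2k} / (2k+1)!) • T^k`. -/
noncomputable def Dsi (T : H →L[ℝ] H) (s : ℝ) : H →L[ℝ] H :=
  ∑' k : ℕ, ((-1 : ℝ) ^ k * s ^ (2 * k) / (Nat.factorial (2 * k + 1) : ℝ)) • T ^ k

/-- The focal-point operator `Q(s) = Dco(s) - s • (Dsi(s) ∘ S)`. -/
noncomputable def Qop (T S : H →L[ℝ] H) (s : ℝ) : H →L[ℝ] H :=
  Dco T s - s • (Dsi T s ∘L S)

/-- The scalar Jacobi solution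
`c_{λ,μ}(s) = ∑ (-1)^k s^{2k} λ^k/(2k)! - s·μ·∑ (-1)^k s^{2k} λ^k/(2k+1)!`. -/
noncomputable def cJacobi (lam mu : ℝ) (s : ℝ) : ℝ :=
  (∑' k : ℕ, (-1 : ℝ) ^ k * s ^ (2 * k) * lam ^ k / (Nat.factorial (2 * k) : ℝ)) -
    s * mu * ∑' k : ℕ, (-1 : ℝ) ^ k * s ^ (2 * k) * lam ^ k / (Nat.factorial (2 * k + 1) : ℝ)

open scoped Nat

/-! The operator `Q(s)` is the identity plus a compact operator: `Dco(s) - 1` is `T` composed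
with a norm-convergent power series in `T`, and `Dsi(s) ∘ S` has the compact factor `S`. On the
kernel of `1 - K`, a compact `K` acts as the identity, so that kernel has a compact unit ball and
is finite dimensional by Riesz's theorem. -/

theorem IsCompactOperator.finiteDimensional_ker_one_sub {𝕜 E : Type*}
    [NontriviallyNormedField 𝕜] [CompleteSpace 𝕜] [NormedAddCommGroup E] [NormedSpace 𝕜 E] {K : E →L[𝕜] E}
    (hK : IsCompactOperator K) :
    FiniteDimensional 𝕜 (LinearMap.ker ((1 - K : E →L[𝕜] E) : E →ₗ[𝕜] E)) := by
  set V := LinearMap.ker ((1 - K : E →L[𝕜] E) : E →ₗ[𝕜] E)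
  have hfix : ∀ v ∈ V, K v = v := fun v hv ↦ (sub_eq_zero.mp hv).symm
  have hres : ⇑((K : E →ₗ[𝕜] E).restrict fun v hv ↦ (hfix v hv).symm ▸ hv) = id :=
    funext fun v ↦ Subtype.ext (hfix v v.2)
  refine .of_isCompactOperator_id ?_
  rw [← hres]
  exact hK.restrict _ (1 - K).isClosed_ker

theorem IsCompactOperator.tsum {ι 𝕜 E F : Type*} [NontriviallyNormedField 𝕜]
    [NormedAddCommGroup E] [NormedSpace 𝕜 E] [NormedAddCommGroup F] [NormedSpace 𝕜 F]
    [CompleteSpace F] {f : ι → E →L[𝕜] F} (hf : ∀ i, IsCompactOperator (f i)) :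
    IsCompactOperator ⇑(∑' i, f i) := by
  by_cases hs : Summable f
  · refine isCompactOperator_of_tendsto hs.hasSum (.of_forall fun t ↦ ?_)
    exact Submodule.sum_mem (compactOperator (RingHom.id 𝕜) E F) fun i _ ↦ hf i
  · simpa [tsum_eq_zero_of_not_summable hs] using isCompactOperator_zero

theorem summable_smul_pow_of_norm_le_pow_div_factorial {𝕜 A : Type*} [NormedField 𝕜]
    [NormedRing A] [NormedAlgebra 𝕜 A] [CompleteSpace A] (x : A) {a : ℕ → 𝕜} {c : ℝ}
    (ha : ∀ k, ‖a k‖ ≤ c ^ k / k !) : Summable fun k ↦ a k • x ^ k := by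
  refine (summable_nat_add_iff 1).mp <|
    .of_norm_bounded ((summable_nat_add_iff 1).mpr (Real.summable_pow_div_factorial (c * ‖x‖)))
      fun k ↦ ?_
  calc ‖a (k + 1) • x ^ (k + 1)‖ ≤ c ^ (k + 1) / (k + 1)! * ‖x‖ ^ (k + 1) := by
        rw [norm_smul]
        exact mul_le_mul (ha _) (norm_pow_le' x k.succ_pos) (norm_nonneg _)
          ((norm_nonneg _).trans (ha _))
    _ = (c * ‖x‖) ^ (k + 1) / (k + 1)! := by ring

theorem IsCompactOperator.tsum_smul_pow_sub_smul_one {𝕜 E : Type*} [NontriviallyNormedField 𝕜]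
    [NormedAddCommGroup E] [NormedSpace 𝕜 E] [CompleteSpace E] {T : E →L[𝕜] E}
    (hT : IsCompactOperator T) {a : ℕ → 𝕜} (ha : Summable fun k ↦ a k • T ^ k) :
    IsCompactOperator ⇑(∑' k, a k • T ^ k - a 0 • 1) := by
  rw [ha.tsum_eq_zero_add, pow_zero, add_sub_cancel_left]
  refine IsCompactOperator.tsum fun k ↦ ?_
  rw [pow_succ, ContinuousLinearMap.mul_def]
  exact (hT.clm_comp (T ^ k)).smul (a (k + 1))

theorem norm_neg_one_pow_mul_pow_two_mul_div_factorial_le (s : ℝ) (k : ℕ) :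
    ‖(-1 : ℝ) ^ k * s ^ (2 * k) / (2 * k)!‖ ≤ (s ^ 2) ^ k / k ! := by
  rw [Real.norm_eq_abs, abs_div, abs_mul, pow_mul, abs_pow, abs_pow, abs_neg, abs_one, one_pow,
    one_mul, abs_sq, Nat.abs_cast]
  gcongr
  omega

theorem Qop_ker_finiteDimensional_general
    (T S : H →L[ℝ] H)
    (hTc : IsCompactOperator T) (hSc : IsCompactOperator S) :
    ∀ s : ℝ, FiniteDimensional ℝ (LinearMap.ker (Qop T S s : H →ₗ[ℝ] H)) := by
  intro s
  have hDco : IsCompactOperator ⇑(Dco T s - 1) := by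
    simpa [Dco] using hTc.tsum_smul_pow_sub_smul_one <|
      summable_smul_pow_of_norm_le_pow_div_factorial T
        (norm_neg_one_pow_mul_pow_two_mul_div_factorial_le s)
  have hDsiS : IsCompactOperator ⇑(Dsi T s ∘L S) := hSc.clm_comp _
  have hK : IsCompactOperator ⇑(1 - Qop T S s) := by
    rw [show 1 - Qop T S s = s • (Dsi T s ∘L S) - (Dco T s - 1) by rw [Qop]; abel]
    exact (hDsiS.smul s).sub hDco
  have hker := hK.finiteDimensional_ker_one_sub
  rwa [sub_sub_cancel] at hker

/-- For every `s ∈ ℝ` the kernel of `Q(s)` is finite dimensional;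
in particular every focal radius has finite multiplicity. -/
theorem Qop_ker_finiteDimensional
    (T S : H →L[ℝ] H)
    (hTc : IsCompactOperator T) (hSc : IsCompactOperator S)
    (hTsa : IsSelfAdjoint T) (hSsa : IsSelfAdjoint S)
    (hcomm : T ∘L S = S ∘L T) :
    ∀ s : ℝ, FiniteDimensional ℝ (LinearMap.ker (Qop T S s : H →ₗ[ℝ] H)) :=
  Qop_ker_finiteDimensional_general T S hTc hSc
end

section
/- There exists ε > 0, depending only on the operator norms ‖T‖ and ‖S‖, such that for every r ∈ ℝ with |r| < ε the operator Q(r) is invertible (it is a continuous linear equivalence of H), and the operator A^r := (r·(T ∘ Dsi(r)) + S ∘ Dco(r)) ∘ Q(r)⁻¹ is a compact self-adjoint operator that commutes with both T and S. -/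
/-!
With `x = r² ‖T‖`, the series give `‖Dco(r) - 1‖ ≤ eˣ - 1` and `‖Dsi(r)‖ ≤ eˣ`, hence
`‖Q(r) - 1‖ ≤ eˣ - 1 + |r| ‖S‖ eˣ`, which is `< 1` once `|r| < 1 / (3 (‖T‖ + ‖S‖) + 1)`; then
`Q(r)` is invertible by the Neumann series. Every operator built from `T` and `S` by these power
series commutes with anything commuting with `T` and `S`, so all of them commute with each other;
a product of commuting self-adjoint operators is self-adjoint, and compact operators form an ideal.
-/

variable {H : Type*} [NormedAddCommGroup H] [InnerProductSpace ℝ H] [CompleteSpace H]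

/-- The shape operator of the parallel submanifold at distance `r`:
`A^r = (r • (T ∘ Dsi(r)) + S ∘ Dco(r)) ∘ Q(r)⁻¹` (via `Ring.inverse`). -/
noncomputable def Ar (T S : H →L[ℝ] H) (r : ℝ) : H →L[ℝ] H :=
  (r • (T ∘L Dsi T r) + S ∘L Dco T r) ∘L Ring.inverse (Qop T S r)

open scoped Nat

theorem ContinuousLinearMap.opNorm_pow_le {𝕜 E : Type*} [NontriviallyNormedField 𝕜]
    [NormedAddCommGroup E] [NormedSpace 𝕜 E] (T : E →L[𝕜] E) (k : ℕ) : ‖T ^ k‖ ≤ ‖T‖ ^ k := by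
  rcases Nat.eq_zero_or_pos k with rfl | hk
  · rw [pow_zero, pow_zero]
    exact norm_id_le
  · exact norm_pow_le' T hk

theorem abs_neg_one_pow_mul_pow_two_mul_div_factorial_le (s : ℝ) {k n : ℕ} (hkn : k ≤ n) :
    |(-1 : ℝ) ^ k * s ^ (2 * k) / n !| ≤ (s ^ 2) ^ k / k ! := by
  rw [abs_div, abs_mul, abs_pow, abs_neg, abs_one, one_pow, one_mul, pow_mul,
    abs_of_nonneg (by positivity), Nat.abs_cast]
  gcongr

theorem exp_sub_one_add_mul_exp_lt_one {a b r : ℝ} (ha : 0 ≤ a) (hb : 0 ≤ b)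
    (hr : |r| < (3 * (a + b) + 1)⁻¹) :
    Real.exp (r ^ 2 * a) - 1 + |r| * b * Real.exp (r ^ 2 * a) < 1 := by
  have hd : 0 < 3 * (a + b) + 1 := by positivity
  have hr' : |r| * (3 * (a + b) + 1) < 1 := by
    simpa only [inv_mul_cancel₀ hd.ne'] using mul_lt_mul_of_pos_right hr hd
  have hr1 : |r| ≤ 1 := by nlinarith [abs_nonneg r]
  have hx : r ^ 2 * a ≤ |r| * a := by
    gcongr
    nlinarith [sq_abs r, abs_nonneg r]
  have hx1 : |r ^ 2 * a| ≤ 1 := by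
    rw [abs_of_nonneg (by positivity)]
    nlinarith [abs_nonneg r]
  have hexp : Real.exp (r ^ 2 * a) - 1 ≤ 2 * (|r| * a) := by
    have := (le_abs_self _).trans (Real.abs_exp_sub_one_le hx1)
    rw [abs_of_nonneg (by positivity)] at this
    linarith
  have hexp3 : Real.exp (r ^ 2 * a) ≤ 3 := by nlinarith [abs_nonneg r]
  nlinarith [mul_nonneg (abs_nonneg r) hb, abs_nonneg r]

theorem norm_tsum_smul_pow_sub_le {E : Type*} [NormedAddCommGroup E] [NormedSpace ℝ E]
    [CompleteSpace E] (T : E →L[ℝ] E) {c : ℕ → ℝ} {t : ℝ} (hc : ∀ k, |c k| ≤ t ^ k / k !) :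
    ‖∑' k, c k • T ^ k - c 0 • 1‖ ≤ Real.exp (t * ‖T‖) - 1 := by
  have hterm : ∀ k, ‖c k • T ^ k‖ ≤ (t * ‖T‖) ^ k / k ! := fun k =>
    calc ‖c k • T ^ k‖ = |c k| * ‖T ^ k‖ := by rw [norm_smul, Real.norm_eq_abs]
      _ ≤ t ^ k / k ! * ‖T‖ ^ k :=
        mul_le_mul (hc k) (T.opNorm_pow_le k) (norm_nonneg _) ((abs_nonneg _).trans (hc k))
      _ = (t * ‖T‖) ^ k / k ! := by ring
  have hexp : HasSum (fun k => (t * ‖T‖) ^ k / k !) (Real.exp (t * ‖T‖)) := by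
    simpa only [Real.exp_eq_exp_ℝ] using NormedSpace.expSeries_div_hasSum_exp (t * ‖T‖)
  have hsum : Summable fun k => c k • T ^ k := .of_norm_bounded hexp.summable hterm
  rw [hsum.tsum_eq_zero_add, pow_zero, add_sub_cancel_left]
  refine tsum_of_norm_bounded ?_ fun k => hterm (k + 1)
  simpa using (hasSum_nat_add_iff' 1).mpr hexp

section Hilbert

variable {V : Type*} [NormedAddCommGroup V] [InnerProductSpace ℝ V]

theorem norm_dco_sub_one_le [CompleteSpace V] (T : V →L[ℝ] V) (s : ℝ) :
    ‖Dco T s - 1‖ ≤ Real.exp (s ^ 2 * ‖T‖) - 1 := by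
  simpa [Dco] using norm_tsum_smul_pow_sub_le T
    fun k => abs_neg_one_pow_mul_pow_two_mul_div_factorial_le s (n := 2 * k) (by omega)

theorem norm_dsi_le [CompleteSpace V] (T : V →L[ℝ] V) (s : ℝ) :
    ‖Dsi T s‖ ≤ Real.exp (s ^ 2 * ‖T‖) := by
  have h := norm_tsum_smul_pow_sub_le T
    fun k => abs_neg_one_pow_mul_pow_two_mul_div_factorial_le s (n := 2 * k + 1) (by omega)
  simp only [pow_zero, mul_zero, mul_one, zero_add, Nat.factorial_one, Nat.cast_one, div_one,
    one_smul] at h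
  calc ‖Dsi T s‖ ≤ ‖Dsi T s - 1‖ + ‖(1 : V →L[ℝ] V)‖ := norm_le_norm_sub_add _ _
    _ ≤ (Real.exp (s ^ 2 * ‖T‖) - 1) + 1 := add_le_add h ContinuousLinearMap.norm_id_le
    _ = Real.exp (s ^ 2 * ‖T‖) := sub_add_cancel _ _

theorem norm_qop_sub_one_le [CompleteSpace V] (T S : V →L[ℝ] V) (s : ℝ) :
    ‖Qop T S s - 1‖ ≤ Real.exp (s ^ 2 * ‖T‖) - 1 + |s| * ‖S‖ * Real.exp (s ^ 2 * ‖T‖) :=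
  calc ‖Qop T S s - 1‖ = ‖(Dco T s - 1) - s • (Dsi T s ∘L S)‖ := by rw [Qop, sub_right_comm]
    _ ≤ ‖Dco T s - 1‖ + |s| * (‖Dsi T s‖ * ‖S‖) := by
      refine (norm_sub_le _ _).trans (add_le_add le_rfl ?_)
      rw [norm_smul, Real.norm_eq_abs]
      gcongr
      exact ContinuousLinearMap.opNorm_comp_le _ _
    _ ≤ Real.exp (s ^ 2 * ‖T‖) - 1 + |s| * (Real.exp (s ^ 2 * ‖T‖) * ‖S‖) := by
      gcongr
      exacts [norm_dco_sub_one_le T s, norm_dsi_le T s]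
    _ = Real.exp (s ^ 2 * ‖T‖) - 1 + |s| * ‖S‖ * Real.exp (s ^ 2 * ‖T‖) := by ring

theorem isUnit_qop [CompleteSpace V] {T S : V →L[ℝ] V} {r : ℝ}
    (hr : |r| < (3 * (‖T‖ + ‖S‖) + 1)⁻¹) : IsUnit (Qop T S r) := by
  have h : ‖1 - Qop T S r‖ < 1 := by
    rw [norm_sub_rev]
    exact (norm_qop_sub_one_le T S r).trans_lt
      (exp_sub_one_add_mul_exp_lt_one (norm_nonneg _) (norm_nonneg _) hr)
  simpa only [Units.val_oneSub, sub_sub_cancel] using (Units.oneSub _ h).isUnit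

/-- `-Q'(r)`: termwise, `Dco' = -s T Dsi` and `(s Dsi)' = Dco`. -/
noncomputable def negDerivQop (T S : V →L[ℝ] V) (r : ℝ) : V →L[ℝ] V :=
  r • (T * Dsi T r) + S * Dco T r

theorem ar_eq_negDerivQop_mul (T S : V →L[ℝ] V) (r : ℝ) :
    Ar T S r = negDerivQop T S r * Ring.inverse (Qop T S r) := rfl

theorem isCompactOperator_ar {T S : V →L[ℝ] V} (hT : IsCompactOperator T)
    (hS : IsCompactOperator S) (r : ℝ) : IsCompactOperator (Ar T S r) :=
  (((hT.comp_clm (Dsi T r)).smul r).add (hS.comp_clm (Dco T r))).comp_clm _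

section Commute

variable {B T S : V →L[ℝ] V}

theorem Commute.dco_right (h : Commute B T) (s : ℝ) : Commute B (Dco T s) :=
  .tsum_right _ fun k => (h.pow_right k).smul_right _

theorem Commute.dsi_right (h : Commute B T) (s : ℝ) : Commute B (Dsi T s) :=
  .tsum_right _ fun k => (h.pow_right k).smul_right _

theorem Commute.qop_right (hT : Commute B T) (hS : Commute B S) (s : ℝ) :
    Commute B (Qop T S s) :=
  (hT.dco_right s).sub_right (((hT.dsi_right s).mul_right hS).smul_right s)

theorem Commute.negDerivQop_right (hT : Commute B T) (hS : Commute B S) (r : ℝ) :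
    Commute B (negDerivQop T S r) :=
  ((hT.mul_right (hT.dsi_right r)).smul_right r).add_right (hS.mul_right (hT.dco_right r))

theorem Commute.ringInverse_right {M₀ : Type*} [MonoidWithZero M₀] {a b : M₀}
    (h : Commute a b) : Commute a (Ring.inverse b) := by
  by_cases hb : IsUnit b
  · obtain ⟨u, rfl⟩ := hb
    rw [Ring.inverse_unit]
    exact h.units_inv_right
  · rw [Ring.inverse_non_unit b hb]
    exact .zero_right a

theorem Commute.ar_right (hT : Commute B T) (hS : Commute B S) (r : ℝ) :
    Commute B (Ar T S r) :=
  (hT.negDerivQop_right hS r).mul_right (hT.qop_right hS r).ringInverse_right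

end Commute

section SelfAdjoint

variable [CompleteSpace V] {T S : V →L[ℝ] V}

theorem IsSelfAdjoint.tsum {ι α : Type*} [AddCommMonoid α] [TopologicalSpace α] [StarAddMonoid α]
    [ContinuousStar α] [T2Space α] {f : ι → α} (h : ∀ i, IsSelfAdjoint (f i)) :
    IsSelfAdjoint (∑' i, f i) := by
  rw [IsSelfAdjoint, tsum_star]
  exact tsum_congr fun i => (h i).star_eq

theorem IsSelfAdjoint.dco (hT : IsSelfAdjoint T) (s : ℝ) : IsSelfAdjoint (Dco T s) :=
  .tsum fun k => .smul (.all _) (hT.pow k)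

theorem IsSelfAdjoint.dsi (hT : IsSelfAdjoint T) (s : ℝ) : IsSelfAdjoint (Dsi T s) :=
  .tsum fun k => .smul (.all _) (hT.pow k)

theorem IsSelfAdjoint.qop (hT : IsSelfAdjoint T) (hS : IsSelfAdjoint S) (hTS : Commute T S)
    (s : ℝ) : IsSelfAdjoint (Qop T S s) :=
  (hT.dco s).sub ((IsSelfAdjoint.all s).smul
    (((hT.dsi s).commute_iff hS).mp (hTS.symm.dsi_right s).symm))

theorem IsSelfAdjoint.negDerivQop (hT : IsSelfAdjoint T) (hS : IsSelfAdjoint S)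
    (hTS : Commute T S) (r : ℝ) : IsSelfAdjoint (_root_.negDerivQop T S r) :=
  ((IsSelfAdjoint.all r).smul ((hT.commute_iff (hT.dsi r)).mp ((Commute.refl T).dsi_right r))).add
    ((hS.commute_iff (hT.dco r)).mp (hTS.symm.dco_right r))

theorem IsSelfAdjoint.ar (hT : IsSelfAdjoint T) (hS : IsSelfAdjoint S) (hTS : Commute T S)
    (r : ℝ) : IsSelfAdjoint (Ar T S r) := by
  have hTN : Commute T (_root_.negDerivQop T S r) := (Commute.refl T).negDerivQop_right hTS r
  have hSN : Commute S (_root_.negDerivQop T S r) := hTS.symm.negDerivQop_right (.refl S) r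
  rw [ar_eq_negDerivQop_mul]
  exact ((hT.negDerivQop hS hTS r).commute_iff (hT.qop hS hTS r).ringInverse).mp
    (hTN.symm.qop_right hSN.symm r).ringInverse_right

end SelfAdjoint

end Hilbert

/-- There exists `ε > 0`, depending only on `‖T‖` and `‖S‖`, such that
for every `r` with `|r| < ε` the operator `Q(r)` is invertible and
`A^r = (r • (T ∘ Dsi(r)) + S ∘ Dco(r)) ∘ Q(r)⁻¹` is a compact self-adjoint operator
commuting with both `T` and `S`. -/
theorem parallel_shape_operator_exists :
    ∃ ε : ℝ → ℝ → ℝ, (∀ a b : ℝ, 0 < ε a b) ∧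
      ∀ (H : Type*) [NormedAddCommGroup H] [InnerProductSpace ℝ H] [CompleteSpace H]
        (T S : H →L[ℝ] H), IsCompactOperator T → IsCompactOperator S →
        IsSelfAdjoint T → IsSelfAdjoint S → T ∘L S = S ∘L T →
        ∀ r : ℝ, |r| < ε ‖T‖ ‖S‖ →
          IsUnit (Qop T S r) ∧
          IsCompactOperator (Ar T S r) ∧
          IsSelfAdjoint (Ar T S r) ∧
          Commute (Ar T S r) T ∧
          Commute (Ar T S r) S := by
  refine ⟨fun a b => (3 * (|a| + |b|) + 1)⁻¹, fun a b => by positivity, ?_⟩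
  intro H _ _ _ T S hTc hSc hT hS hTS r hr
  simp only [abs_norm] at hr
  have hTS : Commute T S := hTS
  exact ⟨isUnit_qop hr, isCompactOperator_ar hTc hSc r, hT.ar hS hTS r,
    ((Commute.refl T).ar_right hTS r).symm, (hTS.symm.ar_right (.refl S) r).symm⟩
end
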